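/- arXiv:0912.2182 — 10 statements merged into one kernel-verified Lean document; each statement's English description precedes it below -/
import Mathlib

section
/- For any positive integer n, the ratio Ω_{n-1}/Ω_n of unit ball volumes equals (1/π) times the infinite product over k ≥ 1 of (2k/(2k-1)) · ((2k+n-1)/(2k+n)). -/
open Real

noncomputable def unitBallVolume (n : ℕ) : ℝ :=
  Real.pi ^ ((n : ℝ) / 2) / Real.Gamma (1 + (n : ℝ) / 2)

/-!
The `k`-th factor is `(k + 1)(k + (n+1)/2) / ((k + 1/2)(k + 1 + n/2))`. Whenever `a + b = c + d`,
the partial product of `(a + k)(b + k) / ((c + k)(d + k))` over `k ≤ N` equals exactly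
`γ_N(c) γ_N(d) / (γ_N(a) γ_N(b))` for Euler's sequence `γ_N(s) = N^s N! / (s (s+1) ⋯ (s+N))`,
because the powers of `N` cancel; as `γ_N → Γ`, the product is `Γ(c)Γ(d) / (Γ(a)Γ(b))`.
Here this gives `√π Γ(1 + n/2) / Γ((n+1)/2)`, which is `π Ω_{n-1} / Ω_n`.
-/

open Filter Finset Topology
open scoped Nat

namespace Real

variable {a b c d : ℝ}

theorem GammaSeq_mul_div_GammaSeq_mul_eq_prod (h : a + b = c + d) {N : ℕ} (hN : N ≠ 0) :
    GammaSeq c N * GammaSeq d N / (GammaSeq a N * GammaSeq b N) =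
      ∏ k ∈ range (N + 1), (a + k) * (b + k) / ((c + k) * (d + k)) := by
  have hN' : (0 : ℝ) < N := by exact_mod_cast Nat.pos_of_ne_zero hN
  have hpow :
      (N : ℝ) ^ c * N ! * ((N : ℝ) ^ d * N !) = (N : ℝ) ^ a * N ! * ((N : ℝ) ^ b * N !) := by
    rw [mul_mul_mul_comm, ← rpow_add hN', mul_mul_mul_comm (_ ^ a), ← rpow_add hN', h]
  have hne : (N : ℝ) ^ a * N ! * ((N : ℝ) ^ b * N !) ≠ 0 := by positivity
  rw [prod_div_distrib, prod_mul_distrib, prod_mul_distrib, GammaSeq, GammaSeq, GammaSeq, GammaSeq,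
    div_mul_div_comm, div_mul_div_comm, hpow, div_div_div_cancel_left' _ _ hne]

theorem tendsto_prod_mul_div_mul (h : a + b = c + d) (hab : Gamma a * Gamma b ≠ 0) :
    Tendsto (fun N ↦ ∏ k ∈ range N, (a + k) * (b + k) / ((c + k) * (d + k))) atTop
      (𝓝 (Gamma c * Gamma d / (Gamma a * Gamma b))) := by
  rw [← tendsto_add_atTop_iff_nat 1]
  refine (((GammaSeq_tendsto_Gamma c).mul (GammaSeq_tendsto_Gamma d)).div
    ((GammaSeq_tendsto_Gamma a).mul (GammaSeq_tendsto_Gamma b)) hab).congr' ?_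
  filter_upwards [eventually_ne_atTop 0] with N hN
  exact GammaSeq_mul_div_GammaSeq_mul_eq_prod h hN

theorem multipliable_mul_div_mul (h : a + b = c + d) (hc : 0 < c) (hd : 0 < d) :
    Multipliable fun k : ℕ ↦ (a + k) * (b + k) / ((c + k) * (d + k)) := by
  obtain ⟨m, hm, hmc, hmd⟩ : ∃ m, 0 < m ∧ m ≤ c ∧ m ≤ d :=
    ⟨min c d, lt_min hc hd, min_le_left c d, min_le_right c d⟩
  have hsq : Summable fun k : ℕ ↦ 1 / ((k : ℝ) + m) ^ 2 := by
    refine ((summable_one_div_nat_add_rpow m 2).mpr one_lt_two).congr fun k ↦ ?_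
    rw [abs_of_pos (by positivity), rpow_two]
  have hbound : Summable fun k : ℕ ↦ (a * b - c * d) / ((c + k) * (d + k)) := by
    refine (hsq.mul_left |a * b - c * d|).of_norm_bounded fun k ↦ ?_
    have hk : (0 : ℝ) ≤ k := k.cast_nonneg
    have hck : 0 < (c + k) * (d + k) := by positivity
    rw [Real.norm_eq_abs, abs_div, abs_of_pos hck, mul_one_div]
    refine div_le_div_of_nonneg_left (abs_nonneg _) (by positivity) ?_
    rw [sq]
    exact mul_le_mul (by linarith) (by linarith) (by positivity) (by positivity)
  refine (Real.multipliable_one_add_of_summable hbound).congr fun k ↦ ?_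
  have hck : (c + k) * (d + k) ≠ 0 := by positivity
  rw [one_add_div hck, div_left_inj' hck]
  linear_combination -(k : ℝ) * h

theorem hasProd_mul_div_mul (h : a + b = c + d) (ha : 0 < a) (hb : 0 < b) (hc : 0 < c)
    (hd : 0 < d) :
    HasProd (fun k : ℕ ↦ (a + k) * (b + k) / ((c + k) * (d + k)))
      (Gamma c * Gamma d / (Gamma a * Gamma b)) :=
  (multipliable_mul_div_mul h hc hd).hasProd_iff_tendsto_nat.mpr
    (tendsto_prod_mul_div_mul h (by positivity [Gamma_pos_of_pos ha, Gamma_pos_of_pos hb]))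

end Real

theorem hasProd_generalized_wallis (x : ℝ) (hx : 0 ≤ x) :
    HasProd (fun k : ℕ ↦ (2 * ((k : ℝ) + 1) / (2 * ((k : ℝ) + 1) - 1)) *
        ((2 * ((k : ℝ) + 1) + x - 1) / (2 * ((k : ℝ) + 1) + x)))
      (√π * Gamma (1 + x / 2) / Gamma ((x + 1) / 2)) := by
  have key := hasProd_mul_div_mul (a := 1) (b := (x + 1) / 2) (c := 1 / 2) (d := 1 + x / 2)
    (by ring) one_pos (by positivity) one_half_pos (by positivity)
  rw [Gamma_one, Gamma_one_half_eq, one_mul] at key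
  refine key.congr_fun fun k ↦ ?_
  have hk : (0 : ℝ) ≤ k := k.cast_nonneg
  have hk1 : 0 < 2 * ((k : ℝ) + 1) - 1 := by linarith
  rw [div_mul_div_comm, div_eq_div_iff (by positivity) (by positivity)]
  ring

theorem unitBallVolume_sub_one_div {n : ℕ} (hn : 1 ≤ n) :
    unitBallVolume (n - 1) / unitBallVolume n =
      Gamma (1 + (n : ℝ) / 2) / (√π * Gamma (((n : ℝ) + 1) / 2)) := by
  have hpow : π ^ ((n : ℝ) / 2) = π ^ (((n : ℝ) - 1) / 2) * √π := by
    rw [sqrt_eq_rpow, ← rpow_add pi_pos]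
    ring_nf
  have hΓ : 0 < Gamma (1 + (n : ℝ) / 2) := Gamma_pos_of_pos (by positivity)
  have hpos : 0 < π ^ (((n : ℝ) - 1) / 2) := rpow_pos_of_pos pi_pos _
  rw [unitBallVolume, unitBallVolume, Nat.cast_sub hn, Nat.cast_one, hpow,
    show 1 + ((n : ℝ) - 1) / 2 = ((n : ℝ) + 1) / 2 by ring]
  field_simp

theorem stmt_1 (n : ℕ) (hn : 1 ≤ n) :
    unitBallVolume (n - 1) / unitBallVolume n =
      (1 / Real.pi) *
        ∏' k : ℕ, (2 * ((k : ℝ) + 1) / (2 * ((k : ℝ) + 1) - 1)) *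
          ((2 * ((k : ℝ) + 1) + n - 1) / (2 * ((k : ℝ) + 1) + n)) := by
  rw [(hasProd_generalized_wallis n n.cast_nonneg).tprod_eq, unitBallVolume_sub_one_div hn]
  have hs : 0 < √π := sqrt_pos.mpr pi_pos
  field_simp
  rw [sq_sqrt pi_pos.le]
end

section
/- For every positive integer n, 2(n+1)/(π(n+2)) < Ω_{n-1}/Ω_n. -/
open Real

lemma gamma_sq_le (x : ℝ) (hx : 0 < x) :
    Real.Gamma (x + 1/2) ^ 2 ≤ x * Real.Gamma x ^ 2 := by
  have hx1 : (0:ℝ) < x + 1 := by linarith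
  have hg := Real.convexOn_log_Gamma.2 (Set.mem_Ioi.2 hx) (Set.mem_Ioi.2 hx1)
      (by norm_num : (0:ℝ) ≤ 1/2) (by norm_num : (0:ℝ) ≤ 1/2) (by norm_num)
  simp only [Function.comp_apply, smul_eq_mul] at hg
  have hmid : (1/2 : ℝ) * x + (1/2) * (x+1) = x + 1/2 := by ring
  rw [hmid] at hg
  have hpos1 : 0 < Real.Gamma (x + 1/2) := Real.Gamma_pos_of_pos (by linarith)
  have hpos2 : 0 < Real.Gamma x := Real.Gamma_pos_of_pos hx
  have hpos3 : 0 < Real.Gamma (x+1) := Real.Gamma_pos_of_pos hx1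
  have h2 : Real.log (Real.Gamma (x + 1/2) ^ 2) ≤ Real.log (Real.Gamma x * Real.Gamma (x+1)) := by
    rw [Real.log_pow, Real.log_mul hpos2.ne' hpos3.ne']
    push_cast
    linarith
  have h3 : Real.Gamma (x + 1/2) ^ 2 ≤ Real.Gamma x * Real.Gamma (x+1) :=
    (Real.log_le_log_iff (by positivity) (by positivity)).1 h2
  rw [Real.Gamma_add_one hx.ne'] at h3
  nlinarith

theorem stmt_3 (n : ℕ) (hn : 1 ≤ n) :
    2 * ((n : ℝ) + 1) / (Real.pi * ((n : ℝ) + 2)) <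
      unitBallVolume (n - 1) / unitBallVolume n := by
  have hπ := Real.pi_pos
  rcases eq_or_lt_of_le hn with h1 | h2
  · -- n = 1
    subst h1
    have h0 : unitBallVolume (1-1) = 1 := by
      show unitBallVolume 0 = 1
      unfold unitBallVolume
      norm_num [Real.Gamma_one]
    have h1' : unitBallVolume 1 = 2 := by
      unfold unitBallVolume
      rw [show (1:ℝ) + ((1:ℕ):ℝ)/2 = 1/2 + 1 by norm_num,
        Real.Gamma_add_one (by norm_num : (1/2:ℝ) ≠ 0), Real.Gamma_one_half_eq,
        show ((1:ℕ):ℝ)/2 = (1/2:ℝ) by norm_num, ← Real.sqrt_eq_rpow]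
      have hs : (0:ℝ) < Real.sqrt π := Real.sqrt_pos.2 hπ
      field_simp
    rw [h0, h1']
    rw [div_lt_div_iff₀ (by positivity) (by norm_num)]
    push_cast
    nlinarith [Real.pi_gt_three]
  · -- n ≥ 2
    have hn2 : 2 ≤ n := h2
    have hnr : (2:ℝ) ≤ (n:ℝ) := by exact_mod_cast hn2
    set x : ℝ := (n:ℝ)/2 with hxdef
    have hx : 0 < x := by positivity
    have hΓ1 : 0 < Real.Gamma (x + 1/2) := Real.Gamma_pos_of_pos (by linarith)
    have hΓ2 : 0 < Real.Gamma (x + 1) := Real.Gamma_pos_of_pos (by linarith)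
    have hΓ3 : 0 < Real.Gamma x := Real.Gamma_pos_of_pos hx
    have hratio : unitBallVolume (n-1) / unitBallVolume n
        = Real.Gamma (x+1) / (Real.Gamma (x+1/2) * Real.sqrt π) := by
      unfold unitBallVolume
      have hc : ((n-1:ℕ):ℝ) = (n:ℝ) - 1 := by
        push_cast [Nat.cast_sub hn]; ring
      rw [hc]
      have e1 : 1 + ((n:ℝ)-1)/2 = x + 1/2 := by rw [hxdef]; ring
      have e2 : 1 + (n:ℝ)/2 = x + 1 := by rw [hxdef]; ring
      rw [e1, e2]
      rw [show (n:ℝ)/2 = ((n:ℝ)-1)/2 + 1/2 by ring, Real.rpow_add hπ,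
        ← Real.sqrt_eq_rpow]
      have hp : (0:ℝ) < π ^ (((n:ℝ)-1)/2) := Real.rpow_pos_of_pos hπ _
      have hs : (0:ℝ) < Real.sqrt π := Real.sqrt_pos.2 hπ
      field_simp
    rw [hratio]
    have hgle : Real.Gamma (x + 1/2) ≤ Real.sqrt x * Real.Gamma x := by
      have h := gamma_sq_le x hx
      have : Real.Gamma (x+1/2) = Real.sqrt (Real.Gamma (x+1/2)^2) := by
        rw [Real.sqrt_sq hΓ1.le]
      rw [this]
      calc Real.sqrt (Real.Gamma (x+1/2)^2) ≤ Real.sqrt (x * Real.Gamma x ^2) :=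
            Real.sqrt_le_sqrt h
        _ = Real.sqrt x * Real.Gamma x := by
            rw [Real.sqrt_mul hx.le, Real.sqrt_sq hΓ3.le]
    have hstep : Real.sqrt x / Real.sqrt π ≤
        Real.Gamma (x+1) / (Real.Gamma (x+1/2) * Real.sqrt π) := by
      rw [div_le_div_iff₀ (Real.sqrt_pos.2 hπ) (by positivity)]
      have hΓx1 : Real.Gamma (x+1) = x * Real.Gamma x := Real.Gamma_add_one hx.ne'
      have hsx : Real.sqrt x * Real.sqrt x = x := Real.mul_self_sqrt hx.le
      have h1 : Real.sqrt x * Real.Gamma (x+1/2) ≤ x * Real.Gamma x := by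
        nlinarith [mul_le_mul_of_nonneg_left hgle (Real.sqrt_nonneg x), hsx]
      rw [hΓx1]
      nlinarith [mul_le_mul_of_nonneg_right h1 (Real.sqrt_nonneg π)]
    refine lt_of_lt_of_le ?_ hstep
    have key : 8*((n:ℝ)+1)^2 < π * (n:ℝ) * ((n:ℝ)+2)^2 := by
      have h3 : (3:ℝ) < π := Real.pi_gt_three
      have ht : (0:ℝ) ≤ (n:ℝ) - 2 := by linarith
      have hA : 8*((n:ℝ)+1)^2 < 3*(n:ℝ)*((n:ℝ)+2)^2 := by
        nlinarith [ht, mul_nonneg ht ht, mul_nonneg (mul_nonneg ht ht) ht]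
      have hB : 3*(n:ℝ)*((n:ℝ)+2)^2 ≤ π*(n:ℝ)*((n:ℝ)+2)^2 := by
        nlinarith [h3, hnr, sq_nonneg ((n:ℝ)+2)]
      linarith
    have hq : (2*((n:ℝ)+1)/(π*((n:ℝ)+2)))^2 < x/π := by
      rw [div_pow, div_lt_div_iff₀ (by positivity) hπ, hxdef]
      nlinarith [key, hπ]
    calc 2*((n:ℝ)+1)/(π*((n:ℝ)+2))
        = Real.sqrt ((2*((n:ℝ)+1)/(π*((n:ℝ)+2)))^2) := by
          rw [Real.sqrt_sq (by positivity)]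
      _ < Real.sqrt (x/π) := Real.sqrt_lt_sqrt (by positivity) hq
      _ = Real.sqrt x / Real.sqrt π := Real.sqrt_div hx.le π
end

section
/- For every integer n ≥ 3, the inequality 1/(2(n-1)) ≤ log(4(n+1)² / (π·n(n+2))) holds. -/
open Real

lemma log_lb_aux (x : ℝ) (hx : 0 < x) : 1 - 1/x ≤ Real.log x := by
  have h := Real.log_le_sub_one_of_pos (x := 1/x) (by positivity)
  rw [Real.log_div one_ne_zero (ne_of_gt hx), Real.log_one] at h
  linarith

theorem stmt_4 (n : ℕ) (hn : 3 ≤ n) :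
    1 / (2 * ((n : ℝ) - 1)) ≤
      Real.log (4 * ((n : ℝ) + 1) ^ 2 / (Real.pi * n * ((n : ℝ) + 2))) := by
  have hpi := Real.pi_pos
  have hpi2 := Real.pi_lt_d2
  have hn3 : (3 : ℝ) ≤ (n : ℝ) := by exact_mod_cast hn
  rcases eq_or_lt_of_le hn with h3 | h4
  · -- n = 3
    subst h3
    push_cast
    have harg : (0:ℝ) < 4 * ((3:ℝ) + 1) ^ 2 / (Real.pi * 3 * ((3:ℝ) + 2)) := by
      positivity
    have hlb := log_lb_aux _ harg
    have hval : 1 / (4 * ((3:ℝ) + 1) ^ 2 / (Real.pi * 3 * ((3:ℝ) + 2))) =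
        15 * Real.pi / 64 := by
      field_simp
      ring
    rw [hval] at hlb
    nlinarith
  · -- n ≥ 4
    have hn4 : (4 : ℝ) ≤ (n : ℝ) := by exact_mod_cast h4
    have hLHS : 1 / (2 * ((n : ℝ) - 1)) ≤ 1 / 6 := by
      apply div_le_div_of_nonneg_left (by norm_num) (by norm_num)
      linarith
    have harg4 : 4 / Real.pi ≤ 4 * ((n : ℝ) + 1) ^ 2 / (Real.pi * n * ((n : ℝ) + 2)) := by
      rw [div_le_div_iff₀ hpi (by positivity)]
      have : (n:ℝ) * ((n:ℝ) + 2) ≤ ((n:ℝ) + 1) ^ 2 := by nlinarith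
      nlinarith
    have hmono : Real.log (4 / Real.pi) ≤
        Real.log (4 * ((n : ℝ) + 1) ^ 2 / (Real.pi * n * ((n : ℝ) + 2))) :=
      Real.log_le_log (by positivity) harg4
    have hlb := log_lb_aux (4 / Real.pi) (by positivity)
    have hval : 1 / (4 / Real.pi) = Real.pi / 4 := by field_simp
    rw [hval] at hlb
    nlinarith
end

section
/- For every integer n ≥ 2, (n/(n-1))·[log((n+2)/2) - 1/(2(n-1))] ≥ log((π/8)·n·((n+2)/(n+1))²). -/
open Real

lemma log_five_half : (3:ℝ)/4 < Real.log (5/2) := by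
  rw [Real.lt_log_iff_exp_lt (by norm_num)]
  have h4 : Real.exp (3/4) ^ (4:ℕ) = Real.exp 3 := by
    rw [← Real.exp_nat_mul]; norm_num
  have h3 : Real.exp 3 = Real.exp 1 ^ (3:ℕ) := by
    rw [← Real.exp_nat_mul]; norm_num
  have he : Real.exp 1 < 2.7182818286 := Real.exp_one_lt_d9
  have hpos : (0:ℝ) ≤ Real.exp (3/4) := (Real.exp_pos _).le
  have : Real.exp (3/4) ^ (4:ℕ) < (5/2:ℝ) ^ (4:ℕ) := by
    rw [h4, h3]
    calc Real.exp 1 ^ (3:ℕ) < 2.7182818286 ^ (3:ℕ) := by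
          exact pow_lt_pow_left₀ he (Real.exp_pos 1).le (by norm_num)
      _ < (5/2:ℝ) ^ (4:ℕ) := by norm_num
  exact lt_of_pow_lt_pow_left₀ 4 (by norm_num) this

theorem stmt_5 (n : ℕ) (hn : 2 ≤ n) :
    ((n : ℝ) / ((n : ℝ) - 1)) * (Real.log (((n : ℝ) + 2) / 2) - 1 / (2 * ((n : ℝ) - 1))) ≥
      Real.log ((Real.pi / 8) * n * (((n : ℝ) + 2) / ((n : ℝ) + 1)) ^ 2) := by
  rcases eq_or_lt_of_le hn with h2 | h3
  · -- n = 2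
    subst h2
    push_cast
    have hpi : Real.pi < 3.15 := Real.pi_lt_d2
    have hpi0 : (0:ℝ) < Real.pi := Real.pi_pos
    have he : Real.exp 1 < 2.7182818286 := Real.exp_one_lt_d9
    have he0 : (0:ℝ) < Real.exp 1 := Real.exp_pos 1
    have harg : (Real.pi / 8) * 2 * (((2:ℝ) + 2) / ((2:ℝ) + 1)) ^ 2 = 4 * Real.pi / 9 := by
      ring
    rw [harg]
    have hle : Real.log (4 * Real.pi / 9) ≤ 2 * Real.log 2 - 1 := by
      rw [Real.log_le_iff_le_exp (by positivity)]
      have : Real.exp (2 * Real.log 2 - 1) = 4 / Real.exp 1 := by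
        rw [Real.exp_sub]
        congr 1
        rw [show (2:ℝ) * Real.log 2 = Real.log (2^(2:ℕ)) by rw [Real.log_pow]; push_cast; ring]
        rw [Real.exp_log (by norm_num)]; norm_num
      rw [this, div_le_div_iff₀ (by norm_num) he0]
      nlinarith
    have hgoal : ((2:ℝ) / (2 - 1)) * (Real.log (((2:ℝ) + 2) / 2) - 1 / (2 * ((2:ℝ) - 1)))
        = 2 * Real.log 2 - 1 := by
      norm_num
      ring
    rw [hgoal]
    exact hle
  · -- n ≥ 3
    have hx3 : (3:ℝ) ≤ (n:ℝ) := by exact_mod_cast h3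
    set x : ℝ := (n:ℝ) with hxdef
    have hx1 : x - 1 ≠ 0 := by intro h; nlinarith
    have hx1pos : (0:ℝ) < x - 1 := by linarith
    set L : ℝ := Real.log ((x + 2) / 2) with hL
    have hL34 : (3:ℝ)/4 ≤ L := by
      have : Real.log (5/2) ≤ L := by
        apply Real.log_le_log (by norm_num)
        linarith
      linarith [log_five_half]
    have hfrac : x / (2 * (x - 1)) ≤ 3/4 := by
      rw [div_le_iff₀ (by linarith)]
      nlinarith
    have key : (x / (x - 1)) * (L - 1 / (2 * (x - 1)))
        = L + (1 / (x - 1)) * (L - x / (2 * (x - 1))) := by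
      field_simp
      ring
    have hLHS : L ≤ (x / (x - 1)) * (L - 1 / (2 * (x - 1))) := by
      rw [key]
      have h1 : (0:ℝ) ≤ 1 / (x - 1) := by positivity
      have h2 : (0:ℝ) ≤ L - x / (2 * (x - 1)) := by linarith
      nlinarith
    have hRHS : Real.log ((Real.pi / 8) * x * ((x + 2) / (x + 1)) ^ 2) ≤ L := by
      apply Real.log_le_log (by positivity)
      have hx0 : (0:ℝ) < x := by linarith
      have h2 : ((x + 2) / (x + 1)) ^ 2 ≤ (x + 2) / x := by
        rw [div_pow, div_le_div_iff₀ (by positivity) hx0]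
        nlinarith
      have hpi4 : Real.pi ≤ 4 := Real.pi_le_four
      have hpi0 : (0:ℝ) < Real.pi := Real.pi_pos
      calc Real.pi / 8 * x * ((x + 2) / (x + 1)) ^ 2
          ≤ Real.pi / 8 * x * ((x + 2) / x) := by
            apply mul_le_mul_of_nonneg_left h2 (by positivity)
        _ = Real.pi * (x + 2) / 8 := by field_simp
        _ ≤ (x + 2) / 2 := by rw [div_le_div_iff₀ (by norm_num) (by norm_num)]; nlinarith
    exact le_trans hRHS hLHS
end

section
/- For t > 0, log(t + 1/2) - 1/t < ψ(t), where ψ is the digamma function. -/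
/-!
Put `f x = ψ x - log (x + 1/2) + 1/x`. Convexity of `log ∘ Γ` together with
`log Γ(x + 1) - log Γ(x) = log x` traps `ψ x` between `log x - 1/x` and `log x`, so `f x → 0` as
`x → ∞`. The recursion `ψ (x + 1) = ψ x + 1/x` gives
`f x - f (x + 1) = log (1 + 1/(x + 1/2)) - 1/(x + 1)`, which is positive: it is the sum of all but
the first term of the series `log (1 + 1/a) = ∑ₖ 2/(2k+1) · (2a+1)^-(2k+1)` at `a = x + 1/2`.
So `f` strictly decreases along `x, x + 1, x + 2, …` towards `0`, whence `f x > 0`.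
-/

open Real

/-- The digamma function ψ = Γ'/Γ. -/
noncomputable def digamma (x : ℝ) : ℝ := deriv Real.Gamma x / Real.Gamma x

open Set Filter Topology

lemma differentiableAt_Gamma_of_pos {x : ℝ} (hx : 0 < x) : DifferentiableAt ℝ Gamma x :=
  differentiableAt_Gamma fun m ↦ ((neg_nonpos.mpr m.cast_nonneg).trans_lt hx).ne'

lemma differentiableAt_log_Gamma {x : ℝ} (hx : 0 < x) : DifferentiableAt ℝ (log ∘ Gamma) x :=
  (differentiableAt_Gamma_of_pos hx).log (Gamma_pos_of_pos hx).ne'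

lemma digamma_eq_deriv_log_Gamma {x : ℝ} (hx : 0 < x) : digamma x = deriv (log ∘ Gamma) x := by
  rw [Function.comp_def, deriv.log (differentiableAt_Gamma_of_pos hx) (Gamma_pos_of_pos hx).ne',
    digamma]

lemma log_Gamma_add_one {x : ℝ} (hx : 0 < x) : log (Gamma (x + 1)) = log (Gamma x) + log x := by
  rw [Gamma_add_one hx.ne', log_mul hx.ne' (Gamma_pos_of_pos hx).ne', add_comm]

lemma digamma_add_one {x : ℝ} (hx : 0 < x) : digamma (x + 1) = digamma x + 1 / x := by
  rw [digamma_eq_deriv_log_Gamma (by positivity), digamma_eq_deriv_log_Gamma hx,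
    ← deriv_comp_add_const, one_div, ← deriv_log,
    ← deriv_add (differentiableAt_log_Gamma hx) (differentiableAt_log hx.ne')]
  apply EventuallyEq.deriv_eq
  filter_upwards [eventually_gt_nhds hx] with y hy using log_Gamma_add_one hy

lemma slope_log_Gamma_add_one {x : ℝ} (hx : 0 < x) : slope (log ∘ Gamma) x (x + 1) = log x := by
  rw [slope_def_field, Function.comp_apply, Function.comp_apply, log_Gamma_add_one hx]
  ring

lemma digamma_le_log {x : ℝ} (hx : 0 < x) : digamma x ≤ log x := by
  rw [digamma_eq_deriv_log_Gamma hx, ← slope_log_Gamma_add_one hx]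
  exact convexOn_log_Gamma.deriv_le_slope hx (by positivity : 0 < x + 1) (by linarith)
    (differentiableAt_log_Gamma hx)

lemma log_le_digamma_add_one {x : ℝ} (hx : 0 < x) : log x ≤ digamma (x + 1) := by
  rw [digamma_eq_deriv_log_Gamma (by positivity), ← slope_log_Gamma_add_one hx]
  exact convexOn_log_Gamma.slope_le_deriv hx (by positivity : 0 < x + 1) (by linarith)
    (differentiableAt_log_Gamma (by positivity))

lemma tendsto_digamma_sub_log_atTop : Tendsto (fun x ↦ digamma x - log x) atTop (𝓝 0) := by
  have hlower : Tendsto (fun x : ℝ ↦ -x⁻¹) atTop (𝓝 0) := by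
    simpa using (tendsto_inv_atTop_zero (𝕜 := ℝ)).neg
  refine tendsto_of_tendsto_of_tendsto_of_le_of_le' hlower tendsto_const_nhds ?_ ?_
  all_goals filter_upwards [eventually_gt_atTop 0] with x hx
  · have h := log_le_digamma_add_one hx
    rw [digamma_add_one hx] at h
    linarith [one_div x]
  · linarith [digamma_le_log hx]

lemma two_div_two_mul_add_one_lt_log_one_add_inv {a : ℝ} (ha : 0 < a) :
    2 / (2 * a + 1) < log (1 + a⁻¹) := by
  have h := lt_hasSum (hasSum_log_one_add_inv ha) 0 (fun k _ ↦ by positivity) 1 one_ne_zero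
    (by positivity)
  simpa [div_eq_mul_inv] using h

lemma lt_of_tendsto_of_forall_add_one_lt {f : ℝ → ℝ} {l : ℝ} (hlim : Tendsto f atTop (𝓝 l))
    (hstep : ∀ x, 0 < x → f (x + 1) < f x) {x : ℝ} (hx : 0 < x) : l < f x := by
  have hanti : Antitone fun n : ℕ ↦ f (x + 1 + n) :=
    antitone_nat_of_succ_le fun n ↦ by
      simpa [add_assoc] using (hstep (x + 1 + n) (by positivity)).le
  have hlim' : Tendsto (fun n : ℕ ↦ f (x + 1 + n)) atTop (𝓝 l) :=
    hlim.comp (tendsto_atTop_add_const_left _ _ tendsto_natCast_atTop_atTop)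
  calc l ≤ f (x + 1) := by simpa using hanti.le_of_tendsto hlim' 0
    _ < f x := hstep x hx

theorem stmt_6 (t : ℝ) (ht : 0 < t) :
    Real.log (t + 1/2) - 1 / t < digamma t := by
  set f : ℝ → ℝ := fun x ↦ digamma x - log (x + 1/2) + 1 / x
  have hlim : Tendsto f atTop (𝓝 0) := by
    have h := (tendsto_digamma_sub_log_atTop.sub (tendsto_log_comp_add_sub_log (1/2))).add
      tendsto_inv_atTop_zero
    simp only [sub_zero, add_zero] at h
    refine h.congr fun x ↦ ?_
    simp only [f]
    ring
  have hstep : ∀ x, 0 < x → f (x + 1) < f x := by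
    intro x hx
    have h := two_div_two_mul_add_one_lt_log_one_add_inv (by positivity : 0 < x + 1/2)
    rw [show 1 + (x + 1/2)⁻¹ = (x + 1 + 1/2) / (x + 1/2) by field_simp; ring,
      log_div (by positivity) (by positivity),
      show 2 / (2 * (x + 1/2) + 1) = 1 / (x + 1) by field_simp; ring] at h
    simp only [f, digamma_add_one hx]
    linarith
  linarith [lt_of_tendsto_of_forall_add_one_lt hlim hstep ht]
end

section
/- For every positive integer n, (n+2)²/((n+1)(n+3)) < Ω_n²/(Ω_{n-1}·Ω_{n+1}); in particular 1 < Ω_n²/(Ω_{n-1}·Ω_{n+1}), i.e., the sequence (Ω_n) is strictly log-concave. -/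
/-!
With `t = (n + 2) / 2` the powers of `π` cancel and `Ω_n² / (Ω_{n-1} Ω_{n+1})` becomes
`Γ(t - 1/2) Γ(t + 1/2) / Γ(t)²`. Log-convexity of `Γ` makes this ratio at least `1`, and
`Γ(s + 1) = s Γ(s)` shows that going from `t + 1` down to `t` multiplies it by
`t² / (t² - 1/4) > 1`. One step gives strict log-concavity, two steps give the bound
`t² / (t² - 1/4) = (n + 2)² / ((n + 1)(n + 3))`.
-/

open Real

namespace Real

theorem Gamma_sq_le_mul_Gamma {p q : ℝ} (hp : 0 < p) (hq : 0 < q) :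
    Gamma ((p + q) / 2) ^ 2 ≤ Gamma p * Gamma q := by
  have hconv := convexOn_log_Gamma.2 (Set.mem_Ioi.2 hp) (Set.mem_Ioi.2 hq)
    (by norm_num : (0 : ℝ) ≤ 1 / 2) (by norm_num : (0 : ℝ) ≤ 1 / 2) (by norm_num)
  simp only [Function.comp_apply, smul_eq_mul] at hconv
  rw [show 1 / 2 * p + 1 / 2 * q = (p + q) / 2 by ring] at hconv
  have hpq : 0 < Gamma ((p + q) / 2) := Gamma_pos_of_pos (by positivity)
  rw [← log_le_log_iff (by positivity) (mul_pos (Gamma_pos_of_pos hp) (Gamma_pos_of_pos hq)),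
    log_pow, log_mul (Gamma_pos_of_pos hp).ne' (Gamma_pos_of_pos hq).ne']
  push_cast
  linarith

end Real

noncomputable def gammaRatio (t : ℝ) : ℝ :=
  Gamma (t - 1 / 2) * Gamma (t + 1 / 2) / Gamma t ^ 2

theorem one_le_gammaRatio {t : ℝ} (ht : 1 / 2 < t) : 1 ≤ gammaRatio t := by
  have hmid := Gamma_sq_le_mul_Gamma (p := t - 1 / 2) (q := t + 1 / 2) (by linarith) (by linarith)
  rw [show (t - 1 / 2 + (t + 1 / 2)) / 2 = t by ring] at hmid
  have hΓ : 0 < Gamma t := Gamma_pos_of_pos (by linarith)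
  rwa [gammaRatio, one_le_div (by positivity)]

theorem gammaRatio_add_one {t : ℝ} (h₀ : t ≠ 0) (h₁ : t - 1 / 2 ≠ 0) (h₂ : t + 1 / 2 ≠ 0) :
    gammaRatio (t + 1) = (t - 1 / 2) * (t + 1 / 2) / t ^ 2 * gammaRatio t := by
  have e₁ := Gamma_add_one h₁
  have e₂ := Gamma_add_one h₂
  rw [gammaRatio, gammaRatio, Gamma_add_one h₀, show t + 1 - 1 / 2 = t - 1 / 2 + 1 by ring,
    show t + 1 + 1 / 2 = t + 1 / 2 + 1 by ring, e₁, e₂]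
  ring

theorem gammaRatio_eq_mul_gammaRatio_add_one {t : ℝ} (ht : 1 / 2 < t) :
    gammaRatio t = t ^ 2 / ((t - 1 / 2) * (t + 1 / 2)) * gammaRatio (t + 1) := by
  have h₁ : t - 1 / 2 ≠ 0 := by linarith
  have h₂ : t + 1 / 2 ≠ 0 := by linarith
  rw [gammaRatio_add_one (by positivity) h₁ h₂, ← mul_assoc, div_mul_div_comm,
    mul_comm (t ^ 2), div_self (by positivity), one_mul]

theorem one_lt_gammaRatio {t : ℝ} (ht : 1 / 2 < t) : 1 < gammaRatio t := by
  have hfac : 1 < t ^ 2 / ((t - 1 / 2) * (t + 1 / 2)) := by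
    rw [one_lt_div (by nlinarith)]; nlinarith
  rw [gammaRatio_eq_mul_gammaRatio_add_one ht]
  nlinarith [one_le_gammaRatio (show 1 / 2 < t + 1 by linarith)]

theorem lt_gammaRatio {t : ℝ} (ht : 1 / 2 < t) :
    t ^ 2 / ((t - 1 / 2) * (t + 1 / 2)) < gammaRatio t := by
  have hfac : 0 < t ^ 2 / ((t - 1 / 2) * (t + 1 / 2)) := by
    have : 0 < t - 1 / 2 := by linarith
    positivity
  rw [gammaRatio_eq_mul_gammaRatio_add_one ht]
  nlinarith [one_lt_gammaRatio (show 1 / 2 < t + 1 by linarith)]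

theorem unitBallVolume_sq_div_mul {n : ℕ} (hn : 1 ≤ n) :
    unitBallVolume n ^ 2 / (unitBallVolume (n - 1) * unitBallVolume (n + 1)) =
      gammaRatio ((n + 2) / 2) := by
  have hπ := pi_pos
  simp only [unitBallVolume, gammaRatio, Nat.cast_sub hn, Nat.cast_add, Nat.cast_one]
  rw [div_pow, div_mul_div_comm, ← rpow_natCast _ 2, ← rpow_mul hπ.le, ← rpow_add hπ]
  rw [show ((n : ℝ) - 1) / 2 + (n + 1) / 2 = n / 2 * (2 : ℕ) by push_cast; ring,
    show 1 + (n : ℝ) / 2 = (n + 2) / 2 by ring, show 1 + ((n : ℝ) - 1) / 2 = (n + 2) / 2 - 1 / 2 by ring,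
    show 1 + ((n : ℝ) + 1) / 2 = (n + 2) / 2 + 1 / 2 by ring]
  have : 0 < π ^ ((n : ℝ) / 2 * (2 : ℕ)) := by positivity
  field_simp

theorem stmt_12 (n : ℕ) (hn : 1 ≤ n) :
    ((n : ℝ) + 2) ^ 2 / (((n : ℝ) + 1) * ((n : ℝ) + 3)) <
        unitBallVolume n ^ 2 / (unitBallVolume (n - 1) * unitBallVolume (n + 1)) ∧
      1 < unitBallVolume n ^ 2 / (unitBallVolume (n - 1) * unitBallVolume (n + 1)) := by
  have ht : 1 / 2 < ((n : ℝ) + 2) / 2 := by linarith [(n.cast_nonneg : (0 : ℝ) ≤ n)]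
  have hfac : ((n : ℝ) + 2) ^ 2 / (((n : ℝ) + 1) * ((n : ℝ) + 3)) =
      ((n + 2) / 2) ^ 2 / (((n + 2) / 2 - 1 / 2) * ((n + 2) / 2 + 1 / 2)) := by
    rw [div_eq_div_iff (by positivity) (by nlinarith)]
    ring
  rw [unitBallVolume_sq_div_mul hn, hfac]
  exact ⟨lt_gammaRatio ht, one_lt_gammaRatio ht⟩
end

section
/- For x > 0, the trigamma function satisfies ψ'(x) > 1/(x+1) + 1/x² + 1/(2(x+1)²). -/
open Real

/-- The trigamma function ψ'(x) = Σ_{k=0}^∞ 1/(k+x)². -/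
noncomputable def trigamma (x : ℝ) : ℝ := ∑' k : ℕ, 1 / ((k : ℝ) + x) ^ 2

open Filter Topology

/-!
Peel off the first term, `ψ'(x) = 1/x² + ψ'(x+1)`, and bound `ψ'(y)` for `y = x + 1` by a
telescoping sum: with `F t = 1/t + 1/(2t²)` one has `F t - F (t+1) = 1/t² - 1/(2t²(t+1)²) < 1/t²`,
so summing over `t = y + k` gives `F y < ψ'(y)`.
-/

lemma summable_one_div_nat_add_sq (y : ℝ) :
    Summable fun k : ℕ => 1 / ((k : ℝ) + y) ^ 2 := by
  have h := (Real.summable_one_div_nat_add_rpow y 2).mpr one_lt_two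
  simpa only [Real.rpow_two, sq_abs] using h

lemma trigamma_eq_one_div_sq_add_trigamma_add_one (x : ℝ) :
    trigamma x = 1 / x ^ 2 + trigamma (x + 1) := by
  rw [trigamma, (summable_one_div_nat_add_sq x).tsum_eq_zero_add, trigamma]
  congr 1
  · simp
  · exact tsum_congr fun k => by push_cast; ring_nf

lemma lt_tsum_of_sub_succ_le {F f : ℕ → ℝ} (hF : Tendsto F atTop (𝓝 0)) (hf : Summable f)
    (h : ∀ n, F n - F (n + 1) ≤ f n) (i : ℕ) (hi : F i - F (i + 1) < f i) :
    F 0 < ∑' n, f n := by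
  set δ := f i - (F i - F (i + 1))
  have hpartial : ∀ n, i < n → F 0 - F n + δ ≤ ∑ k ∈ Finset.range n, f k := by
    intro n hn
    have hgap : δ ≤ ∑ k ∈ Finset.range n, (f k - (F k - F (k + 1))) :=
      Finset.single_le_sum (f := fun k => f k - (F k - F (k + 1)))
        (fun k _ => sub_nonneg.mpr (h k)) (Finset.mem_range.mpr hn)
    rw [Finset.sum_sub_distrib, Finset.sum_range_sub'] at hgap
    linarith
  have hlim : F 0 + δ ≤ ∑' n, f n := by
    refine le_of_tendsto_of_tendsto ?_ hf.hasSum.tendsto_sum_nat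
      ((eventually_gt_atTop i).mono hpartial)
    simpa using (tendsto_const_nhds (x := F 0)).sub hF |>.add_const δ
  linarith

lemma one_div_add_one_div_two_mul_sq_sub_succ_lt {t : ℝ} (ht : 0 < t) :
    1 / t + 1 / (2 * t ^ 2) - (1 / (t + 1) + 1 / (2 * (t + 1) ^ 2)) < 1 / t ^ 2 := by
  have hdiff : 1 / t + 1 / (2 * t ^ 2) - (1 / (t + 1) + 1 / (2 * (t + 1) ^ 2))
      = 1 / t ^ 2 - 1 / (2 * t ^ 2 * (t + 1) ^ 2) := by
    field_simp
    ring
  rw [hdiff]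
  have : 0 < 1 / (2 * t ^ 2 * (t + 1) ^ 2) := by positivity
  linarith

lemma one_div_add_one_div_two_mul_sq_lt_trigamma {y : ℝ} (hy : 0 < y) :
    1 / y + 1 / (2 * y ^ 2) < trigamma y := by
  have hpos : ∀ k : ℕ, 0 < (k : ℝ) + y := fun k => by positivity
  have hlarge : Tendsto (fun k : ℕ => (k : ℝ) + y) atTop atTop :=
    tendsto_atTop_add_const_right _ _ tendsto_natCast_atTop_atTop
  have hF : Tendsto (fun k : ℕ => 1 / ((k : ℝ) + y) + 1 / (2 * ((k : ℝ) + y) ^ 2)) atTop (𝓝 0) := by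
    simp only [one_div]
    simpa using (tendsto_inv_atTop_zero.comp hlarge).add
      (tendsto_inv_atTop_zero.comp (((tendsto_pow_atTop two_ne_zero).comp hlarge).const_mul_atTop
        two_pos))
  have hstep : ∀ k : ℕ, 1 / ((k : ℝ) + y) + 1 / (2 * ((k : ℝ) + y) ^ 2)
      - (1 / (((k + 1 : ℕ) : ℝ) + y) + 1 / (2 * (((k + 1 : ℕ) : ℝ) + y) ^ 2))
      < 1 / ((k : ℝ) + y) ^ 2 := by
    intro k
    have := one_div_add_one_div_two_mul_sq_sub_succ_lt (hpos k)
    push_cast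
    rwa [add_right_comm]
  simpa [trigamma] using lt_tsum_of_sub_succ_le hF (summable_one_div_nat_add_sq y)
    (fun k => (hstep k).le) 0 (hstep 0)

theorem stmt_13 (x : ℝ) (hx : 0 < x) :
    trigamma x > 1 / (x + 1) + 1 / x ^ 2 + 1 / (2 * (x + 1) ^ 2) := by
  rw [trigamma_eq_one_div_sq_add_trigamma_add_one]
  have := one_div_add_one_div_two_mul_sq_lt_trigamma (by linarith : 0 < x + 1)
  linarith
end

section
/- For every positive integer n, exp((n+3)/(2(n+2)²)) < Ω_n²/(Ω_{n-1}·Ω_{n+1}). -/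
open Real

namespace Stmt14Aux

noncomputable def h (m : ℕ) : ℝ := Real.Gamma (((m : ℝ) + 1) / 2)

noncomputable def Q (m : ℕ) : ℝ := h (m + 1) * h (m + 3) / h (m + 2) ^ 2

noncomputable def τ (m : ℕ) : ℝ := ((m : ℝ) + 4) / (2 * ((m : ℝ) + 3) ^ 2)

noncomputable def f (m : ℕ) : ℝ := Real.log (Q m) - τ m

lemma h_pos (m : ℕ) : 0 < h m := by
  apply Real.Gamma_pos_of_pos
  positivity

lemma h_rec (m : ℕ) : h (m + 2) = (((m : ℝ) + 1) / 2) * h m := by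
  have : (((m + 2 : ℕ) : ℝ) + 1) / 2 = ((m : ℝ) + 1) / 2 + 1 := by push_cast; ring
  rw [h, this, Real.Gamma_add_one (by positivity), h]

lemma Q_pos (m : ℕ) : 0 < Q m :=
  div_pos (mul_pos (h_pos (m + 1)) (h_pos (m + 3))) (pow_pos (h_pos (m + 2)) 2)

lemma τ_pos (m : ℕ) : 0 < τ m := by unfold τ; positivity

lemma Q_prod (m : ℕ) : Q m * Q (m + 1) = ((m : ℝ) + 3) / ((m : ℝ) + 2) := by
  have h1 := h_pos (m + 1); have h2 := h_pos (m + 2); have h3 := h_pos (m + 3)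
  have r1 : h (m + 4) = (((m : ℝ) + 3) / 2) * h (m + 2) := by
    have := h_rec (m + 2); push_cast at this ⊢; convert this using 3 <;> ring
  have r2 : h (m + 3) = (((m : ℝ) + 2) / 2) * h (m + 1) := by
    have := h_rec (m + 1); push_cast at this ⊢; convert this using 3 <;> ring
  have hm2 : (0 : ℝ) < (m : ℝ) + 2 := by positivity
  have : Q (m + 1) = h (m + 2) * h (m + 4) / h (m + 3) ^ 2 := by
    unfold Q; norm_num
  rw [this, Q, r1, r2]
  field_simp

lemma one_le_Q (m : ℕ) : 1 ≤ Q m := by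
  -- log-convexity of Gamma at midpoint
  have hc := Real.convexOn_log_Gamma
  have hx : ((m : ℝ) + 2) / 2 ∈ Set.Ioi (0 : ℝ) := by
    simp only [Set.mem_Ioi]; positivity
  have hy : ((m : ℝ) + 4) / 2 ∈ Set.Ioi (0 : ℝ) := by
    simp only [Set.mem_Ioi]; positivity
  have key := hc.2 hx hy (by norm_num : (0:ℝ) ≤ 1/2) (by norm_num : (0:ℝ) ≤ 1/2)
    (by norm_num)
  have hmid : (1/2 : ℝ) • (((m : ℝ) + 2) / 2) + (1/2 : ℝ) • (((m : ℝ) + 4) / 2)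
      = ((m : ℝ) + 3) / 2 := by simp only [smul_eq_mul]; ring
  rw [hmid] at key
  simp only [Function.comp, smul_eq_mul] at key
  -- key : log Γ((m+3)/2) ≤ 1/2 log Γ((m+2)/2) + 1/2 log Γ((m+4)/2)
  have e1 : h (m + 2) = Real.Gamma (((m : ℝ) + 3) / 2) := by
    unfold h; push_cast; ring_nf
  have e2 : h (m + 1) = Real.Gamma (((m : ℝ) + 2) / 2) := by
    unfold h; push_cast; ring_nf
  have e3 : h (m + 3) = Real.Gamma (((m : ℝ) + 4) / 2) := by
    unfold h; push_cast; ring_nf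
  have h1 := h_pos (m + 1); have h2 := h_pos (m + 2); have h3 := h_pos (m + 3)
  have hsq : h (m + 2) ^ 2 ≤ h (m + 1) * h (m + 3) := by
    have l2 : 2 * Real.log (h (m + 2)) ≤ Real.log (h (m + 1)) + Real.log (h (m + 3)) := by
      rw [e1, e2, e3]; linarith
    have : Real.log (h (m + 2) ^ 2) ≤ Real.log (h (m + 1) * h (m + 3)) := by
      rw [Real.log_pow, Real.log_mul (ne_of_gt h1) (ne_of_gt h3)]
      push_cast; linarith
    exact (Real.log_le_log_iff (by positivity) (by positivity)).mp this
  rw [Q, le_div_iff₀ (by positivity), one_mul]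
  exact hsq

lemma log_Q_nonneg (m : ℕ) : 0 ≤ Real.log (Q m) := Real.log_nonneg (one_le_Q m)

noncomputable def s (m : ℕ) : ℝ :=
  Real.log (((m : ℝ) + 3) / ((m : ℝ) + 2)) - τ m - τ (m + 1)

lemma f_add (m : ℕ) : f m + f (m + 1) = s m := by
  have := Q_prod m
  have hq1 := Q_pos m; have hq2 := Q_pos (m + 1)
  have hlog : Real.log (Q m) + Real.log (Q (m + 1))
      = Real.log (((m : ℝ) + 3) / ((m : ℝ) + 2)) := by
    rw [← Real.log_mul (ne_of_gt hq1) (ne_of_gt hq2), this]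
  unfold f s
  linarith

-- Key explicit inequality: s m - s (m+1) > 0.
lemma s_strict_anti (m : ℕ) : s (m + 1) < s m := by
  have hm2 : (0 : ℝ) < (m : ℝ) + 2 := by positivity
  have hm3 : (0 : ℝ) < (m : ℝ) + 3 := by positivity
  have hm4 : (0 : ℝ) < (m : ℝ) + 4 := by positivity
  have hm5 : (0 : ℝ) < (m : ℝ) + 5 := by positivity
  -- s m - s (m+1) = log((m+3)/(m+2)) - log((m+4)/(m+3)) - τ m + τ (m+2)
  have hτ : τ (m + 1) = τ (m + 1) := rfl
  -- lower bound for the log difference: log x ≥ 1 - 1/x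
  set x : ℝ := ((m : ℝ) + 3) ^ 2 / (((m : ℝ) + 2) * ((m : ℝ) + 4)) with hxdef
  have hxpos : 0 < x := by positivity
  have hlogx : 1 - 1/x ≤ Real.log x := by
    have := Real.log_le_sub_one_of_pos (show 0 < 1/x by positivity)
    rw [Real.log_div one_ne_zero (ne_of_gt hxpos), Real.log_one] at this
    linarith
  have hxval : 1 - 1/x = 1 / ((m : ℝ) + 3) ^ 2 := by
    rw [hxdef]; field_simp; ring
  have hlogsplit : Real.log x =
      Real.log (((m : ℝ) + 3) / ((m : ℝ) + 2)) - Real.log (((m : ℝ) + 4) / ((m : ℝ) + 3)) := by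
    rw [hxdef, ← Real.log_div (by positivity) (by positivity)]
    congr 1
    field_simp
  -- the rational inequality: 1/(m+3)^2 > τ m - τ (m+2)
  have hrat : τ m - τ (m + 2) < 1 / ((m : ℝ) + 3) ^ 2 := by
    unfold τ
    push_cast
    rw [div_sub_div _ _ (by positivity) (by positivity), div_lt_div_iff₀ (by positivity) (by positivity)]
    ring_nf
    nlinarith [sq_nonneg ((m:ℝ)), sq_nonneg ((m:ℝ)+3), hm3, hm5]
  have hs : s m - s (m + 1) = Real.log x - (τ m - τ (m + 2)) := by
    unfold s
    rw [hlogsplit]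
    push_cast
    ring_nf
  have : 0 < s m - s (m + 1) := by
    rw [hs]
    have : τ m - τ (m + 2) < 1 - 1/x := by rw [hxval]; exact hrat
    linarith
  linarith

lemma f_step (m : ℕ) : f m = s m - s (m + 1) + f (m + 2) := by
  have e1 := f_add m
  have e2 := f_add (m + 1)
  have : f (m + 1) + f (m + 2) = s (m + 1) := by
    convert e2 using 3 <;> push_cast <;> ring_nf
  linarith

lemma f_antitone_two (m : ℕ) : f (m + 2) ≤ f m := by
  have := f_step m
  have := s_strict_anti m
  linarith

lemma f_ge_iter (m k : ℕ) : f (m + 2 * k) ≤ f m := by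
  induction k with
  | zero => simp
  | succ k ih =>
    have : f (m + 2 * (k + 1)) = f ((m + 2 * k) + 2) := by ring_nf
    rw [this]
    exact le_trans (f_antitone_two (m + 2 * k)) ih

lemma τ_le (m : ℕ) : τ m ≤ 1 / ((m : ℝ) + 1) := by
  unfold τ
  rw [div_le_div_iff₀ (by positivity) (by positivity)]
  nlinarith [sq_nonneg ((m : ℝ) + 1)]

lemma τ_tendsto (m : ℕ) :
    Filter.Tendsto (fun k : ℕ => τ (m + 2 * k)) Filter.atTop (nhds 0) := by
  apply squeeze_zero (fun k => (τ_pos _).le) (fun k => τ_le _)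
  have hb : Filter.Tendsto (fun k : ℕ => 1 / ((k : ℝ) + 1)) Filter.atTop (nhds 0) :=
    tendsto_one_div_add_atTop_nhds_zero_nat
  have hcomp : Filter.Tendsto (fun k : ℕ => m + 2 * k) Filter.atTop Filter.atTop :=
    Filter.tendsto_atTop_mono (fun k => by omega : ∀ k : ℕ, k ≤ m + 2 * k) Filter.tendsto_id
  have := hb.comp hcomp
  refine this.congr fun k => ?_
  try simp only [Function.comp_apply]
  try push_cast
  try ring

lemma f_nonneg (m : ℕ) : 0 ≤ f m := by
  have key : ∀ k : ℕ, -τ (m + 2 * k) ≤ f m := by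
    intro k
    have h1 : f (m + 2 * k) ≤ f m := f_ge_iter m k
    have h2 : -τ (m + 2 * k) ≤ f (m + 2 * k) := by
      have := log_Q_nonneg (m + 2 * k)
      unfold f
      linarith
    linarith
  have hlim : Filter.Tendsto (fun k : ℕ => -τ (m + 2 * k)) Filter.atTop (nhds 0) := by
    have := (τ_tendsto m).neg
    simpa using this
  exact le_of_tendsto hlim (Filter.Eventually.of_forall key)

lemma f_pos (m : ℕ) : 0 < f m := by
  have := f_step m
  have h1 := s_strict_anti m
  have h2 := f_nonneg (m + 2)
  linarith

lemma exp_lt_Q (m : ℕ) : Real.exp (τ m) < Q m := by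
  have hf := f_pos m
  unfold f at hf
  have : τ m < Real.log (Q m) := by linarith
  calc Real.exp (τ m) < Real.exp (Real.log (Q m)) := Real.exp_lt_exp.mpr this
    _ = Q m := Real.exp_log (Q_pos m)

lemma vol_eq (k : ℕ) : unitBallVolume k = Real.pi ^ ((k : ℝ) / 2) / h (k + 1) := by
  unfold unitBallVolume h
  congr 1
  push_cast
  ring_nf

lemma ratio_eq (m : ℕ) :
    unitBallVolume (m + 1) ^ 2 / (unitBallVolume m * unitBallVolume (m + 2)) = Q m := by
  have hpi : (0 : ℝ) < Real.pi := Real.pi_pos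
  have h1 := h_pos (m + 1); have h2 := h_pos (m + 2); have h3 := h_pos (m + 3)
  rw [vol_eq, vol_eq, vol_eq]
  have hp1 : (Real.pi ^ (((m : ℝ) + 1) / 2)) ^ 2 = Real.pi ^ ((m : ℝ) + 1) := by
    rw [← Real.rpow_natCast (Real.pi ^ (((m : ℝ) + 1) / 2)) 2, ← Real.rpow_mul hpi.le]
    norm_num
  have hp2 : Real.pi ^ ((m : ℝ) / 2) * Real.pi ^ (((m : ℝ) + 2) / 2)
      = Real.pi ^ ((m : ℝ) + 1) := by
    rw [← Real.rpow_add hpi]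
    congr 1
    ring
  have hppos : (0 : ℝ) < Real.pi ^ ((m : ℝ) + 1) := Real.rpow_pos_of_pos hpi _
  have hc1 : ((m + 1 : ℕ) : ℝ) = (m : ℝ) + 1 := by push_cast; ring
  have hc2 : ((m + 2 : ℕ) : ℝ) = (m : ℝ) + 2 := by push_cast; ring
  rw [hc1, hc2, div_pow, hp1, Q]
  rw [div_mul_div_comm, hp2]
  have e3 : m + 2 + 1 = m + 3 := by ring
  rw [e3]
  field_simp

theorem main (n : ℕ) (hn : 1 ≤ n) :
    Real.exp (((n : ℝ) + 3) / (2 * ((n : ℝ) + 2) ^ 2)) <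
      unitBallVolume n ^ 2 / (unitBallVolume (n - 1) * unitBallVolume (n + 1)) := by
  obtain ⟨m, rfl⟩ : ∃ m, n = m + 1 := ⟨n - 1, by omega⟩
  have hsub : m + 1 - 1 = m := rfl
  rw [hsub]
  have heq := ratio_eq m
  have hτ : (((m + 1 : ℕ) : ℝ) + 3) / (2 * (((m + 1 : ℕ) : ℝ) + 2) ^ 2) = τ m := by
    unfold τ; push_cast; ring_nf
  have e : m + 1 + 1 = m + 2 := rfl
  rw [hτ, e, heq]
  exact exp_lt_Q m

end Stmt14Aux

theorem stmt_14 (n : ℕ) (hn : 1 ≤ n) :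
    Real.exp (((n : ℝ) + 3) / (2 * ((n : ℝ) + 2) ^ 2)) <
      unitBallVolume n ^ 2 / (unitBallVolume (n - 1) * unitBallVolume (n + 1)) := by
  exact Stmt14Aux.main n hn
end

section
/- For every positive integer n, ((n+2)²/((n+1)(n+3)))·exp((n+1)/(2(n+2)²)) > √(1 + 1/(n+1)); equivalently, (n+1)/(n+2)² > log((n+1)(n+3)²/(n+2)³). -/
/-!
Put `r x = (x+1)(x+3)²/(x+2)³`. Then `r x - 1 = (x+1)/(x+2)² - 1/(x+2)³`, so `1 + t ≤ exp t` at
`t = r x - 1` gives `r x < exp ((x+1)/(x+2)²)`, which is the logarithmic inequality. Squaring the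
exponential one, it reads `(x+2)/(x+1) < (x+2)⁴/((x+1)²(x+3)²) · exp ((x+1)/(x+2)²)`, and the
right-hand side exceeds `(x+2)⁴/((x+1)²(x+3)²) · r x = (x+2)/(x+1)`.
-/

open Real

lemma ratio_sub_one_eq {x : ℝ} (hx : x + 2 ≠ 0) :
    (x + 1) * (x + 3) ^ 2 / (x + 2) ^ 3 - 1 = (x + 1) / (x + 2) ^ 2 - 1 / (x + 2) ^ 3 := by
  field_simp
  ring

lemma ratio_lt_exp {x : ℝ} (hx : -2 < x) :
    (x + 1) * (x + 3) ^ 2 / (x + 2) ^ 3 < exp ((x + 1) / (x + 2) ^ 2) := by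
  have h2 : 0 < x + 2 := by linarith
  calc (x + 1) * (x + 3) ^ 2 / (x + 2) ^ 3
      = ((x + 1) * (x + 3) ^ 2 / (x + 2) ^ 3 - 1) + 1 := by ring
    _ ≤ exp ((x + 1) * (x + 3) ^ 2 / (x + 2) ^ 3 - 1) := add_one_le_exp _
    _ < exp ((x + 1) / (x + 2) ^ 2) := by
      rw [exp_lt_exp, ratio_sub_one_eq h2.ne']
      have : 0 < 1 / (x + 2) ^ 3 := by positivity
      linarith

lemma log_ratio_lt {x : ℝ} (hx : -1 < x) :
    log ((x + 1) * (x + 3) ^ 2 / (x + 2) ^ 3) < (x + 1) / (x + 2) ^ 2 := by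
  have h1 : 0 < x + 1 := by linarith
  have h2 : 0 < x + 2 := by linarith
  have h3 : 0 < x + 3 := by linarith
  rw [log_lt_iff_lt_exp (by positivity)]
  exact ratio_lt_exp (by linarith)

lemma sqrt_one_add_inv_lt {x : ℝ} (hx : -1 < x) :
    sqrt (1 + 1 / (x + 1)) <
      (x + 2) ^ 2 / ((x + 1) * (x + 3)) * exp ((x + 1) / (2 * (x + 2) ^ 2)) := by
  have h1 : 0 < x + 1 := by linarith
  have h2 : 0 < x + 2 := by linarith
  have h3 : 0 < x + 3 := by linarith
  have hsq : ((x + 2) ^ 2 / ((x + 1) * (x + 3)) * exp ((x + 1) / (2 * (x + 2) ^ 2))) ^ 2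
      = (x + 2) ^ 4 / ((x + 1) ^ 2 * (x + 3) ^ 2) * exp ((x + 1) / (x + 2) ^ 2) := by
    rw [mul_pow, ← exp_nat_mul]
    congr 2
    · field_simp
    · push_cast
      field_simp
  rw [sqrt_lt' (by positivity), hsq]
  calc 1 + 1 / (x + 1)
      = (x + 2) ^ 4 / ((x + 1) ^ 2 * (x + 3) ^ 2) * ((x + 1) * (x + 3) ^ 2 / (x + 2) ^ 3) := by
        field_simp
        ring
    _ < (x + 2) ^ 4 / ((x + 1) ^ 2 * (x + 3) ^ 2) * exp ((x + 1) / (x + 2) ^ 2) := by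
        gcongr
        exact ratio_lt_exp (by linarith)

theorem stmt_16_general (n : ℕ) :
    (((n : ℝ) + 2) ^ 2 / (((n : ℝ) + 1) * ((n : ℝ) + 3))) *
        Real.exp (((n : ℝ) + 1) / (2 * ((n : ℝ) + 2) ^ 2)) >
      Real.sqrt (1 + 1 / ((n : ℝ) + 1)) ∧
    ((n : ℝ) + 1) / ((n : ℝ) + 2) ^ 2 >
      Real.log (((n : ℝ) + 1) * ((n : ℝ) + 3) ^ 2 / ((n : ℝ) + 2) ^ 3) := by
  have hn : (-1 : ℝ) < n := by linarith [n.cast_nonneg (α := ℝ)]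
  exact ⟨sqrt_one_add_inv_lt hn, log_ratio_lt hn⟩

theorem stmt_16 (n : ℕ) (hn : 1 ≤ n) :
    (((n : ℝ) + 2) ^ 2 / (((n : ℝ) + 1) * ((n : ℝ) + 3))) *
        Real.exp (((n : ℝ) + 1) / (2 * ((n : ℝ) + 2) ^ 2)) >
      Real.sqrt (1 + 1 / ((n : ℝ) + 1)) ∧
    ((n : ℝ) + 1) / ((n : ℝ) + 2) ^ 2 >
      Real.log (((n : ℝ) + 1) * ((n : ℝ) + 3) ^ 2 / ((n : ℝ) + 2) ^ 3) :=
  stmt_16_general n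
end

section
/- For every positive integer n, Ω_n²/(Ω_{n-1}·Ω_{n+1}) < exp(1/(2(n+1))). -/
open Real

noncomputable def cseq (n : ℕ) : ℝ :=
  Gamma (((n:ℝ)+1)/2) * Gamma (((n:ℝ)+3)/2) / Gamma (((n:ℝ)+2)/2)^2

lemma cseq_pos (n : ℕ) : 0 < cseq n := by
  have h1 : (0:ℝ) < ((n:ℝ)+1)/2 := by positivity
  have h2 : (0:ℝ) < ((n:ℝ)+3)/2 := by positivity
  have h3 : (0:ℝ) < ((n:ℝ)+2)/2 := by positivity
  exact div_pos (mul_pos (Gamma_pos_of_pos h1) (Gamma_pos_of_pos h2))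
    (pow_pos (Gamma_pos_of_pos h3) 2)

lemma cseq_rec (n : ℕ) : cseq n * cseq (n+1) = ((n:ℝ)+2)/((n:ℝ)+1) := by
  have h1 : (0:ℝ) < ((n:ℝ)+1)/2 := by positivity
  have h2 : (0:ℝ) < ((n:ℝ)+2)/2 := by positivity
  have h3 : (0:ℝ) < ((n:ℝ)+3)/2 := by positivity
  have e1 : Gamma (((n:ℝ)+3)/2) = (((n:ℝ)+1)/2) * Gamma (((n:ℝ)+1)/2) := by
    have := Gamma_add_one (s := ((n:ℝ)+1)/2) (ne_of_gt h1)
    rw [show ((n:ℝ)+1)/2 + 1 = ((n:ℝ)+3)/2 by ring] at this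
    exact this
  have e2 : Gamma (((n:ℝ)+4)/2) = (((n:ℝ)+2)/2) * Gamma (((n:ℝ)+2)/2) := by
    have := Gamma_add_one (s := ((n:ℝ)+2)/2) (ne_of_gt h2)
    rw [show ((n:ℝ)+2)/2 + 1 = ((n:ℝ)+4)/2 by ring] at this
    exact this
  have g1 := (Gamma_pos_of_pos h1).ne'
  have g2 := (Gamma_pos_of_pos h2).ne'
  have g3 := (Gamma_pos_of_pos h3).ne'
  unfold cseq
  push_cast
  rw [show ((n:ℝ)+1+1)/2 = ((n:ℝ)+2)/2 by ring, show ((n:ℝ)+1+3)/2 = ((n:ℝ)+4)/2 by ring,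
    show ((n:ℝ)+1+2)/2 = ((n:ℝ)+3)/2 by ring, e1, e2]
  field_simp

lemma one_le_cseq (n : ℕ) : 1 ≤ cseq n := by
  have h1 : (((n:ℝ)+1)/2) ∈ Set.Ioi (0:ℝ) := by simp; positivity
  have h2 : (((n:ℝ)+3)/2) ∈ Set.Ioi (0:ℝ) := by simp; positivity
  have key := convexOn_log_Gamma.2 h1 h2 (by norm_num : (0:ℝ) ≤ 1/2)
    (by norm_num : (0:ℝ) ≤ 1/2) (by norm_num)
  simp only [Function.comp_apply, smul_eq_mul] at key
  rw [show (1/2 : ℝ) * (((n:ℝ)+1)/2) + (1/2:ℝ) * (((n:ℝ)+3)/2) = ((n:ℝ)+2)/2 by ring] at key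
  have hg1 : (0:ℝ) < Gamma (((n:ℝ)+1)/2) := Gamma_pos_of_pos (by positivity)
  have hg2 : (0:ℝ) < Gamma (((n:ℝ)+3)/2) := Gamma_pos_of_pos (by positivity)
  have hg3 : (0:ℝ) < Gamma (((n:ℝ)+2)/2) := Gamma_pos_of_pos (by positivity)
  have key2 : log (Gamma (((n:ℝ)+2)/2) ^ 2) ≤ log (Gamma (((n:ℝ)+1)/2) * Gamma (((n:ℝ)+3)/2)) := by
    rw [log_pow, log_mul hg1.ne' hg2.ne']
    push_cast
    linarith
  have := (log_le_log_iff (by positivity) (by positivity)).mp key2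
  rw [cseq, le_div_iff₀ (by positivity)]
  linarith

noncomputable def aseq (n : ℕ) : ℝ := log (cseq n)
noncomputable def bseq (n : ℕ) : ℝ := 1/(2*((n:ℝ)+1)) - aseq n

lemma aseq_nonneg (n : ℕ) : 0 ≤ aseq n := log_nonneg (one_le_cseq n)

lemma aseq_rec (n : ℕ) : aseq n + aseq (n+1) = log (((n:ℝ)+2)/((n:ℝ)+1)) := by
  rw [aseq, aseq, ← log_mul (cseq_pos n).ne' (cseq_pos (n+1)).ne', cseq_rec]

lemma aseq_le (n : ℕ) : aseq n ≤ 1/((n:ℝ)+1) := by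
  have h := aseq_rec n
  have h2 := aseq_nonneg (n+1)
  have hlog : log (((n:ℝ)+2)/((n:ℝ)+1)) ≤ ((n:ℝ)+2)/((n:ℝ)+1) - 1 :=
    log_le_sub_one_of_pos (by positivity)
  have : ((n:ℝ)+2)/((n:ℝ)+1) - 1 = 1/((n:ℝ)+1) := by field_simp; norm_num
  linarith

lemma bseq_lb (n : ℕ) : -(1/(2*((n:ℝ)+1))) ≤ bseq n := by
  have := aseq_le n
  rw [bseq]
  have h1 : (0:ℝ) < (n:ℝ)+1 := by positivity
  have : 1/(2*((n:ℝ)+1)) - 1/((n:ℝ)+1) = -(1/(2*((n:ℝ)+1))) := by field_simp; ring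
  linarith [aseq_le n]

noncomputable def sstep (n : ℕ) : ℝ :=
  1/(((n:ℝ)+1)*((n:ℝ)+3)) - log (((n:ℝ)+2)^2/(((n:ℝ)+1)*((n:ℝ)+3)))

lemma sstep_pos (n : ℕ) : 0 < sstep n := by
  have hx : (0:ℝ) < ((n:ℝ)+2)^2/(((n:ℝ)+1)*((n:ℝ)+3)) := by positivity
  have hne : ((n:ℝ)+2)^2/(((n:ℝ)+1)*((n:ℝ)+3)) ≠ 1 := by
    rw [Ne, div_eq_one_iff_eq (by positivity)]
    intro h
    nlinarith
  have := log_lt_sub_one_of_pos hx hne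
  have he : ((n:ℝ)+2)^2/(((n:ℝ)+1)*((n:ℝ)+3)) - 1 = 1/(((n:ℝ)+1)*((n:ℝ)+3)) := by
    field_simp; ring
  rw [sstep]; linarith

lemma bseq_step (n : ℕ) : bseq n = sstep n + bseq (n+2) := by
  have h1 := aseq_rec n
  have h2 := aseq_rec (n+1)
  have e : aseq n - aseq (n+2) = log (((n:ℝ)+2)/((n:ℝ)+1)) - log (((n:ℝ)+3)/((n:ℝ)+2)) := by
    rw [show n+1+1 = n+2 from rfl] at h2
    push_cast at h2
    rw [show (n:ℝ)+1+2 = (n:ℝ)+3 by ring, show (n:ℝ)+1+1 = (n:ℝ)+2 by ring] at h2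
    linarith
  have elog : log (((n:ℝ)+2)/((n:ℝ)+1)) - log (((n:ℝ)+3)/((n:ℝ)+2))
      = log (((n:ℝ)+2)^2/(((n:ℝ)+1)*((n:ℝ)+3))) := by
    rw [← log_div (by positivity) (by positivity)]
    congr 1
    field_simp
  simp only [bseq, sstep]
  push_cast
  have harith : 1/(2*((n:ℝ)+1)) - 1/(2*((n:ℝ)+2+1)) = 1/(((n:ℝ)+1)*((n:ℝ)+3)) := by
    field_simp; ring
  rw [elog] at e
  linarith

lemma bseq_chain (n k : ℕ) : sstep n + bseq (n+2+2*k) ≤ bseq n := by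
  induction k with
  | zero => simpa using (bseq_step n).ge
  | succ k ih =>
    have hstep := bseq_step (n+2+2*k)
    have hpos := sstep_pos (n+2+2*k)
    have : bseq (n+2+2*(k+1)) ≤ bseq (n+2+2*k) := by
      rw [show n+2+2*(k+1) = (n+2+2*k)+2 by ring]
      linarith
    linarith

lemma bseq_pos (n : ℕ) : 0 < bseq n := by
  obtain ⟨k, hk⟩ := exists_nat_gt (1/(sstep n))
  have hs := sstep_pos n
  have hchain := bseq_chain n k
  have hlb := bseq_lb (n+2+2*k)
  have hk' : 1/(sstep n) < (k:ℝ) := hk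
  have hkpos : (0:ℝ) < (k:ℝ) := lt_trans (by positivity) hk'
  have h1 : 1 < (k:ℝ) * sstep n := by
    rw [div_lt_iff₀ hs] at hk'; linarith
  have h2 : 1/(2*(((n:ℕ):ℝ)+2+2*(k:ℝ)+1)) < sstep n := by
    rw [div_lt_iff₀ (by positivity)]
    nlinarith [hs, (Nat.cast_nonneg n : (0:ℝ) ≤ n)]
  have hcast : ((n+2+2*k : ℕ) : ℝ) = (n:ℝ)+2+2*(k:ℝ) := by push_cast; ring
  rw [hcast] at hlb
  linarith

lemma cseq_lt (n : ℕ) : cseq n < Real.exp (1/(2*((n:ℝ)+1))) := by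
  have hb := bseq_pos n
  have : aseq n < 1/(2*((n:ℝ)+1)) := by rw [bseq] at hb; linarith
  calc cseq n = Real.exp (aseq n) := (exp_log (cseq_pos n)).symm
    _ < _ := exp_lt_exp.mpr this

lemma ratio_eq (m : ℕ) :
    unitBallVolume (m+1) ^ 2 / (unitBallVolume m * unitBallVolume (m+2)) = cseq (m+1) := by
  have hpi := pi_pos
  have g1 : (0:ℝ) < Gamma (1 + (m:ℝ)/2) := Gamma_pos_of_pos (by positivity)
  have g2 : (0:ℝ) < Gamma (1 + ((m:ℝ)+1)/2) := Gamma_pos_of_pos (by positivity)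
  have g3 : (0:ℝ) < Gamma (1 + ((m:ℝ)+2)/2) := Gamma_pos_of_pos (by positivity)
  have p1 : (0:ℝ) < Real.pi ^ ((m:ℝ)/2) := rpow_pos_of_pos hpi _
  have p2 : (0:ℝ) < Real.pi ^ (((m:ℝ)+1)/2) := rpow_pos_of_pos hpi _
  have p3 : (0:ℝ) < Real.pi ^ (((m:ℝ)+2)/2) := rpow_pos_of_pos hpi _
  have ppow : (Real.pi ^ (((m:ℝ)+1)/2))^2
      = Real.pi ^ ((m:ℝ)/2) * Real.pi ^ (((m:ℝ)+2)/2) := by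
    rw [sq, ← rpow_add hpi, ← rpow_add hpi]
    congr 1
    ring
  unfold unitBallVolume cseq
  push_cast
  rw [show (1:ℝ) + ((m:ℝ)+1)/2 = ((m:ℝ)+3)/2 by ring,
      show (1:ℝ) + (m:ℝ)/2 = ((m:ℝ)+2)/2 by ring,
      show (1:ℝ) + ((m:ℝ)+2)/2 = ((m:ℝ)+4)/2 by ring] at *
  rw [show ((m:ℝ)+1+1)/2 = ((m:ℝ)+2)/2 by ring, show ((m:ℝ)+1+3)/2 = ((m:ℝ)+4)/2 by ring,
      show ((m:ℝ)+1+2)/2 = ((m:ℝ)+3)/2 by ring]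
  rw [div_pow]
  field_simp
  rw [ppow]

theorem stmt_17 (n : ℕ) (hn : 1 ≤ n) :
    unitBallVolume n ^ 2 / (unitBallVolume (n - 1) * unitBallVolume (n + 1)) <
      Real.exp (1 / (2 * ((n : ℝ) + 1))) := by
  obtain ⟨m, rfl⟩ := Nat.exists_eq_add_of_le hn
  rw [show 1 + m - 1 = m by omega, show 1 + m = m + 1 by ring]
  rw [ratio_eq m]
  have := cseq_lt (m+1)
  push_cast at this ⊢
  convert this using 3 <;> ring
end
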